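/- arXiv:2311.04162 — 2 statements merged into one kernel-verified Lean document; each statement's English description precedes it below -/
import Mathlib

section
/- Let $Z$ be a square-integrable random variable with mean $z_1 = \mathbb{E}[Z]$, second moment $z_2 = \mathbb{E}[Z^2]$ and variance $\sigma_z^2 = \mathbb{V}[Z]$, and let $T > 0$, $a, b \ge 0$, $\nu_1 \in \mathbb R$. Define $\mu_t = \nu_1 + tZ$ and $\hat m_t = \nu_1$ for $t\in[0,T]$. Then $\mathbb{E}\Big[\int_0^T \big(a(\mu_t - \hat m_t) - \tfrac{b}{2}(\mu_t^2 - \hat m_t^2)\big)dt\Big] \ge \tfrac12\mathbb{E}\Big[\int_0^T \big(\tfrac{d\mu}{dt}\big)^2 dt\Big]$ if and only if $T z_1 (a - b\nu_1) - (z_1^2 + \sigma_z^2)\big(b\tfrac{T^2}{3} + 1\big) \ge 0$. -/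
open MeasureTheory ProbabilityTheory

lemma inner_int (T ν1 a b z : ℝ) :
    (∫ t in (0:ℝ)..T,
        (a * ((ν1 + t * z) - ν1) - b/2 * ((ν1 + t * z) ^ 2 - ν1 ^ 2)))
      = ((a - b*ν1)*z) * (T^2/2) - (b*z^2/2) * (T^3/3) := by
  have h : (fun t : ℝ => a * ((ν1 + t * z) - ν1) - b/2 * ((ν1 + t * z) ^ 2 - ν1 ^ 2))
      = fun t : ℝ => ((a - b*ν1)*z) * t^1 - (b*z^2/2) * t^2 := by
    funext t; ring
  rw [h, intervalIntegral.integral_sub, intervalIntegral.integral_const_mul,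
    intervalIntegral.integral_const_mul, integral_pow, integral_pow]
  · ring
  · exact (intervalIntegral.intervalIntegrable_pow 1).const_mul _
  · exact (intervalIntegral.intervalIntegrable_pow 2).const_mul _

/-- Outperformance condition over the mean field Nash equilibrium for linear flows
`μ_t = ν₁ + tZ`, `m̂_t = ν₁`: the payoff inequality holds iff
`T z₁ (a - b ν₁) - (z₁² + σ_z²)(b T²/3 + 1) ≥ 0`. -/
theorem stmt7 {Ω : Type*} [MeasurableSpace Ω] (P : Measure Ω) [IsProbabilityMeasure P]
    (Z : Ω → ℝ) (hZ : MemLp Z 2 P)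
    (T a b ν1 : ℝ) (hT : 0 < T) (ha : 0 ≤ a) (hb : 0 ≤ b)
    (z1 σz2 : ℝ) (hz1 : z1 = ∫ ω, Z ω ∂P) (hσ : σz2 = variance Z P) :
    ((∫ ω, (∫ t in (0:ℝ)..T,
        (a * ((ν1 + t * Z ω) - ν1) - b/2 * ((ν1 + t * Z ω) ^ 2 - ν1 ^ 2))) ∂P)
      ≥ (1/2) * ∫ ω, (∫ t in (0:ℝ)..T, (Z ω) ^ 2) ∂P)
    ↔ T * z1 * (a - b * ν1) - (z1 ^ 2 + σz2) * (b * T ^ 2 / 3 + 1) ≥ 0 := by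
  have hZi : Integrable Z P := hZ.integrable one_le_two
  have hZ2i : Integrable (fun ω => Z ω ^ 2) P := by
    simpa [pow_two] using hZ.integrable_sq
  have hvar : (∫ ω, Z ω ^ 2 ∂P) = z1 ^ 2 + σz2 := by
    rw [hσ, variance_eq_sub hZ, ← hz1]
    simp only [Pi.pow_apply]
    ring
  have hL : (∫ ω, (∫ t in (0:ℝ)..T,
        (a * ((ν1 + t * Z ω) - ν1) - b/2 * ((ν1 + t * Z ω) ^ 2 - ν1 ^ 2))) ∂P)
      = ((a - b*ν1)*z1) * (T^2/2) - (b*(z1^2+σz2)/2) * (T^3/3) := by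
    have : (∫ ω, (∫ t in (0:ℝ)..T,
        (a * ((ν1 + t * Z ω) - ν1) - b/2 * ((ν1 + t * Z ω) ^ 2 - ν1 ^ 2))) ∂P)
        = ∫ ω, (((a - b*ν1) * (T^2/2)) * Z ω - ((b/2) * (T^3/3)) * Z ω ^ 2) ∂P := by
      apply integral_congr_ae
      filter_upwards with ω
      rw [inner_int]; ring
    rw [this, integral_sub (hZi.const_mul _) (hZ2i.const_mul _),
      integral_const_mul, integral_const_mul, hvar, ← hz1]
    ring
  have hR : (∫ ω, (∫ t in (0:ℝ)..T, (Z ω) ^ 2) ∂P) = T * (z1^2 + σz2) := by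
    have : (∫ ω, (∫ t in (0:ℝ)..T, (Z ω) ^ 2) ∂P) = ∫ ω, T * Z ω ^ 2 ∂P := by
      apply integral_congr_ae
      filter_upwards with ω
      simp
    rw [this, integral_const_mul, hvar]
  rw [hL, hR]
  constructor
  · intro h
    nlinarith [h, hT]
  · intro h
    nlinarith [h, hT]
end

section
/- Let $\varepsilon > 0$, $T > 0$ with $\varepsilon T^2 \ge 3$, and let $c_M, c_V$ be the constants of the linear-class optimality condition, so that a linear correlated flow with slope moments $(z_1,\sigma_z^2)$ is a mean field CCE iff $z_1^2 c_M + \sigma_z^2 c_V \ge 0$, with $c_M < 0$ and $c_V > 0$. Then a linear correlated flow is a mean field CCE outperforming the mean field Nash equilibrium payoff if and only if $-\frac{c_M}{c_V}z_1^2 \le \sigma_z^2 \le z_1\frac{3T(a - b\nu_1)}{bT^2 + 3} - z_1^2$. -/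
/-- Characterization of linear-class mean field CCEs outperforming the Nash payoff:
assuming `ε T² ≥ 3`, `c_M < 0 < c_V`, a linear correlated flow with slope moments
`(z₁, σ_z²)` is an outperforming CCE iff
`-(c_M/c_V) z₁² ≤ σ_z² ≤ z₁ · 3T(a - bν₁)/(bT² + 3) - z₁²`. -/
theorem stmt19 (T ε a b ν1 cM cV z1 σz2 : ℝ) (hT : 0 < T) (hε : 0 < ε)
    (hεT : 3 ≤ ε * T ^ 2) (hcM : cM < 0) (hcV : 0 < cV)
    (ha : 0 ≤ a) (hb : 0 ≤ b) (hσ : 0 ≤ σz2) :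
    (0 ≤ z1 ^ 2 * cM + σz2 * cV
      ∧ 0 ≤ T * z1 * (a - b * ν1) - (z1 ^ 2 + σz2) * (b * T ^ 2 / 3 + 1))
    ↔ (-(cM / cV) * z1 ^ 2 ≤ σz2
      ∧ σz2 ≤ z1 * (3 * T * (a - b * ν1)) / (b * T ^ 2 + 3) - z1 ^ 2) := by
  have h3 : (0:ℝ) < b * T ^ 2 + 3 := by positivity
  have h1 : (0 ≤ z1 ^ 2 * cM + σz2 * cV) ↔ -(cM / cV) * z1 ^ 2 ≤ σz2 := by
    rw [neg_mul, neg_le, div_mul_eq_mul_div, le_div_iff₀ hcV]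
    constructor <;> intro <;> nlinarith
  have h2 : (0 ≤ T * z1 * (a - b * ν1) - (z1 ^ 2 + σz2) * (b * T ^ 2 / 3 + 1))
      ↔ σz2 ≤ z1 * (3 * T * (a - b * ν1)) / (b * T ^ 2 + 3) - z1 ^ 2 := by
    rw [sub_nonneg, le_sub_iff_add_le, le_div_iff₀ h3]
    constructor <;> intro <;> nlinarith
  exact and_congr h1 h2
end
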